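/- arXiv:1505.03199 — 6 statements merged into one kernel-verified Lean document; each statement's English description precedes it below -/
import Mathlib

section
/- If X is a mean zero random variable with finite nonzero variance σ², and X^□ has the X-square bias distribution (defined by E[f(X^□)] = E[X² f(X)]/E[X²]) and U is uniform on [0,1] independent of X^□, then U·X^□ has the X-zero bias distribution, i.e., σ² E[g(U X^□)] = E[X F(X)] for all continuous compactly supported g, where F(x) = ∫₀ˣ g(u) du. -/
/-!
Integrating out the independent uniform `U` turns `E[g(U X□)]` into `E[f(X□)]` with
`f x = ∫₀¹ g(t x) dt`, and the square bias relation turns `σ² E[f(X□)]` into `E[X² f(X)]`.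
The substitution `u = t x` gives `x² f(x) = x F(x)`.
-/

open MeasureTheory ProbabilityTheory

/-- `segmentAverage g x = E[g (U x)]` for `U` uniform on `[0, 1]`. -/
noncomputable def segmentAverage (g : ℝ → ℝ) (x : ℝ) : ℝ :=
  ∫ t in (0 : ℝ)..1, g (t * x)

section SegmentAverage

variable {g : ℝ → ℝ}

theorem measurable_segmentAverage (hg : Measurable g) : Measurable (segmentAverage g) := by
  have hprod : StronglyMeasurable fun p : ℝ × ℝ => g (p.2 * p.1) :=
    (hg.comp (measurable_snd.mul measurable_fst)).stronglyMeasurable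
  have hset : Measurable fun x => ∫ t in Set.Ioc (0 : ℝ) 1, g (t * x) :=
    hprod.integral_prod_right.measurable
  unfold segmentAverage
  simpa only [intervalIntegral.integral_of_le zero_le_one] using hset

theorem norm_segmentAverage_le {C : ℝ} (hC : ∀ x, ‖g x‖ ≤ C) (x : ℝ) :
    ‖segmentAverage g x‖ ≤ C := by
  simpa [segmentAverage] using intervalIntegral.norm_integral_le_of_norm_le_const
    (a := 0) (b := 1) (f := fun t => g (t * x)) fun t _ => hC (t * x)

theorem sq_mul_segmentAverage (g : ℝ → ℝ) (x : ℝ) :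
    x ^ 2 * segmentAverage g x = x * ∫ u in (0 : ℝ)..x, g u := by
  rcases eq_or_ne x 0 with rfl | hx
  · simp
  · rw [segmentAverage, intervalIntegral.integral_comp_mul_right g hx, zero_mul, one_mul,
      smul_eq_mul]
    field_simp

end SegmentAverage

namespace ProbabilityTheory

variable {Ω α β : Type*} [MeasurableSpace Ω] [MeasurableSpace α] [MeasurableSpace β]
  {μ : Measure Ω} [IsFiniteMeasure μ] {U : Ω → α} {Y : Ω → β}

theorem IndepFun.integral_comp_prodMk_eq_integral_integral (hind : IndepFun U Y μ)
    (hU : AEMeasurable U μ) (hY : AEMeasurable Y μ) {h : α × β → ℝ}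
    (hh : Integrable h ((μ.map U).prod (μ.map Y))) :
    ∫ ω, h (U ω, Y ω) ∂μ = ∫ ω, ∫ u, h (u, Y ω) ∂(μ.map U) ∂μ := by
  have hmap : μ.map (fun ω => (U ω, Y ω)) = (μ.map U).prod (μ.map Y) :=
    (indepFun_iff_map_prod_eq_prod_map_map hU hY).mp hind
  calc ∫ ω, h (U ω, Y ω) ∂μ = ∫ p, h p ∂((μ.map U).prod (μ.map Y)) := by
        rw [← hmap, integral_map (hU.prodMk hY) (hmap ▸ hh.aestronglyMeasurable)]
    _ = ∫ y, ∫ u, h (u, y) ∂(μ.map U) ∂(μ.map Y) := integral_prod_symm h hh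
    _ = ∫ ω, ∫ u, h (u, Y ω) ∂(μ.map U) ∂μ :=
        integral_map hY hh.integral_prod_right.aestronglyMeasurable

end ProbabilityTheory

theorem integral_comp_uniform_mul_eq_integral_segmentAverage {Ω : Type*} [MeasurableSpace Ω]
    {μ : Measure Ω} [IsFiniteMeasure μ] {U Y : Ω → ℝ} (hUm : Measurable U)
    (hYm : Measurable Y) (hU : μ.map U = volume.restrict (Set.Icc (0 : ℝ) 1))
    (hind : IndepFun U Y μ) {g : ℝ → ℝ} (hg : Measurable g) {C : ℝ} (hC : ∀ x, ‖g x‖ ≤ C) :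
    ∫ ω, g (U ω * Y ω) ∂μ = ∫ ω, segmentAverage g (Y ω) ∂μ := by
  have hint : Integrable (fun p : ℝ × ℝ => g (p.1 * p.2)) ((μ.map U).prod (μ.map Y)) :=
    .of_bound (hg.comp (measurable_fst.mul measurable_snd)).aestronglyMeasurable C
      (.of_forall fun p => hC _)
  rw [hind.integral_comp_prodMk_eq_integral_integral hUm.aemeasurable hYm.aemeasurable hint]
  congr 1 with ω
  rw [hU, integral_Icc_eq_integral_Ioc, segmentAverage,
    intervalIntegral.integral_of_le zero_le_one]

theorem square_bias_uniform_is_zero_bias_general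
    {Ω : Type*} [MeasurableSpace Ω] (μ : Measure Ω) [IsProbabilityMeasure μ]
    (X Xbox U : Ω → ℝ) (σ2 : ℝ)
    (hXm : Measurable X) (hXboxm : Measurable Xbox) (hUm : Measurable U)
    (hL2 : Integrable (fun ω => (X ω) ^ 2) μ)
    (hσ2 : 0 < σ2)
    (hsq : ∀ f : ℝ → ℝ, Measurable f →
      Integrable (fun ω => (X ω) ^ 2 * f (X ω)) μ →
      Integrable (fun ω => f (Xbox ω)) μ →
      ∫ ω, f (Xbox ω) ∂μ = (∫ ω, (X ω) ^ 2 * f (X ω) ∂μ) / σ2)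
    (hU : μ.map U = volume.restrict (Set.Icc (0 : ℝ) 1))
    (hindep : IndepFun U Xbox μ) :
    ∀ g : ℝ → ℝ, Continuous g → HasCompactSupport g →
      σ2 * ∫ ω, g (U ω * Xbox ω) ∂μ = ∫ ω, X ω * (∫ u in (0:ℝ)..(X ω), g u) ∂μ := by
  intro g hgc hgs
  obtain ⟨C, hC⟩ : ∃ C, ∀ x, ‖g x‖ ≤ C := hgs.exists_bound_of_continuous hgc
  have hfm := measurable_segmentAverage hgc.measurable
  have hfC := norm_segmentAverage_le hC
  have hint_X : Integrable (fun ω => X ω ^ 2 * segmentAverage g (X ω)) μ :=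
    hL2.mul_bdd (hfm.comp hXm).aestronglyMeasurable (.of_forall fun ω => hfC _)
  have hint_Xbox : Integrable (fun ω => segmentAverage g (Xbox ω)) μ :=
    .of_bound (hfm.comp hXboxm).aestronglyMeasurable C (.of_forall fun ω => hfC _)
  rw [integral_comp_uniform_mul_eq_integral_segmentAverage hUm hXboxm hU hindep
      hgc.measurable hC, hsq _ hfm hint_X hint_Xbox, mul_div_cancel₀ _ hσ2.ne']
  simp only [sq_mul_segmentAverage]

/-- If `X` has mean zero and finite nonzero variance `σ2`, `Xbox` has the `X`-square bias
distribution, and `U` is uniform on `[0,1]` independent of `Xbox`, then `U * Xbox` has the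
`X`-zero bias distribution, in the sense that
`σ2 * E[g (U * Xbox)] = E[X * F X]` with `F x = ∫ u in 0..x, g u`, for all continuous
compactly supported `g`. -/
theorem square_bias_uniform_is_zero_bias
    {Ω : Type*} [MeasurableSpace Ω] (μ : Measure Ω) [IsProbabilityMeasure μ]
    (X Xbox U : Ω → ℝ) (σ2 : ℝ)
    (hXm : Measurable X) (hXboxm : Measurable Xbox) (hUm : Measurable U)
    (hmean : ∫ ω, X ω ∂μ = 0)
    (hL2 : Integrable (fun ω => (X ω) ^ 2) μ)
    (hvar : ∫ ω, (X ω) ^ 2 ∂μ = σ2) (hσ2 : 0 < σ2)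
    (hsq : ∀ f : ℝ → ℝ, Measurable f →
      Integrable (fun ω => (X ω) ^ 2 * f (X ω)) μ →
      Integrable (fun ω => f (Xbox ω)) μ →
      ∫ ω, f (Xbox ω) ∂μ = (∫ ω, (X ω) ^ 2 * f (X ω) ∂μ) / σ2)
    (hU : μ.map U = volume.restrict (Set.Icc (0 : ℝ) 1))
    (hindep : IndepFun U Xbox μ) :
    ∀ g : ℝ → ℝ, Continuous g → HasCompactSupport g →
      σ2 * ∫ ω, g (U ω * Xbox ω) ∂μ = ∫ ω, X ω * (∫ u in (0:ℝ)..(X ω), g u) ∂μ :=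
  square_bias_uniform_is_zero_bias_general μ X Xbox U σ2 hXm hXboxm hUm hL2 hσ2 hsq hU hindep
end

section
/- Let ε be a bounded mean zero random variable with variance σ² ∈ (0,∞) satisfying E[ε³]=0, supported in [a,b] with a<0<b. Let Y have the ε-zero bias distribution with density p_Y(y) = σ⁻² E[ε 1(ε>y)]. Then the function h_Y(t) = (∫_t^b y p_Y(y) dy)/p_Y(t) satisfies 0 ≤ h_Y(t) ≤ b²/2 for all t ∈ [0,b]. -/
/-!
On `[0, b]` the zero bias density `p_Y` is nonnegative and nonincreasing, since raising `y ≥ 0`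
removes from `{ε > y}` only points where `ε > 0`.
Hence `∫_t^b y p_Y(y) dy ≤ p_Y(t) ∫_t^b y dy ≤ (b²/2) p_Y(t)`.
-/

open MeasureTheory

section SuperlevelIntegral

variable {Ω : Type*} [MeasurableSpace Ω] {μ : Measure Ω} {f : Ω → ℝ}

lemma setIntegral_superlevel_nonneg (hf : Measurable f) {y : ℝ} (hy : 0 ≤ y) :
    0 ≤ ∫ ω in {ω | y < f ω}, f ω ∂μ :=
  setIntegral_nonneg (measurableSet_lt measurable_const hf) fun _ hω => hy.trans (le_of_lt hω)

lemma antitoneOn_setIntegral_superlevel (hf : Measurable f) (hfi : Integrable f μ) :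
    AntitoneOn (fun y => ∫ ω in {ω | y < f ω}, f ω ∂μ) (Set.Ici 0) := by
  intro y₁ hy₁ y₂ _ h₁₂
  refine setIntegral_mono_set hfi.integrableOn ?_ ?_
  · exact (ae_restrict_iff' (measurableSet_lt measurable_const hf)).2
      (ae_of_all _ fun _ hω => (Set.mem_Ici.1 hy₁).trans (le_of_lt hω))
  · exact LE.le.eventuallyLE fun _ hω => lt_of_le_of_lt h₁₂ hω

end SuperlevelIntegral

lemma intervalIntegral_id_mul_le_of_antitoneOn {g : ℝ → ℝ} {t b : ℝ} (ht : 0 ≤ t) (htb : t ≤ b)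
    (hg : AntitoneOn g (Set.Icc t b)) :
    ∫ y in t..b, y * g y ≤ (b ^ 2 - t ^ 2) / 2 * g t := by
  have hg_int : IntervalIntegrable g volume t b := by
    rw [← Set.uIcc_of_le htb] at hg
    exact hg.intervalIntegrable
  calc ∫ y in t..b, y * g y
      ≤ ∫ y in t..b, y * g t := by
        refine intervalIntegral.integral_mono_on htb (hg_int.continuousOn_mul continuousOn_id)
          (intervalIntegrable_const.continuousOn_mul continuousOn_id) fun y hy => ?_
        exact mul_le_mul_of_nonneg_left
          (hg ⟨le_rfl, htb⟩ hy hy.1) (ht.trans hy.1)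
    _ = (b ^ 2 - t ^ 2) / 2 * g t := by
        rw [intervalIntegral.integral_mul_const, integral_id]

theorem hY_bounded_on_right_general
    {Ω : Type*} [MeasurableSpace Ω] (μ : Measure Ω) [IsProbabilityMeasure μ]
    (ε : Ω → ℝ) (a b σ2 : ℝ) (hσ2 : 0 < σ2)
    (hεm : Measurable ε)
    (hsupp : ∀ᵐ ω ∂μ, ε ω ∈ Set.Icc a b)
    (pY : ℝ → ℝ) (hpY : ∀ y, pY y = σ2⁻¹ * ∫ ω in {ω | y < ε ω}, ε ω ∂μ)
    (hY : ℝ → ℝ) (hhY : ∀ t, hY t = (∫ y in t..b, y * pY y) / pY t) :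
    ∀ t ∈ Set.Icc (0 : ℝ) b, 0 ≤ hY t ∧ hY t ≤ b ^ 2 / 2 := by
  rintro t ⟨ht, htb⟩
  have hεi : Integrable ε μ := Integrable.of_mem_Icc a b hεm.aemeasurable hsupp
  have hpY_nonneg : ∀ y, 0 ≤ y → 0 ≤ pY y := fun y hy => by
    rw [hpY]
    exact mul_nonneg (inv_nonneg.2 hσ2.le) (setIntegral_superlevel_nonneg hεm hy)
  have hpY_anti : AntitoneOn pY (Set.Icc t b) := fun y₁ hy₁ y₂ hy₂ h₁₂ => by
    rw [hpY, hpY]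
    exact mul_le_mul_of_nonneg_left
      (antitoneOn_setIntegral_superlevel hεm hεi (ht.trans hy₁.1) (ht.trans hy₂.1) h₁₂)
      (inv_nonneg.2 hσ2.le)
  have hnum_nonneg : 0 ≤ ∫ y in t..b, y * pY y :=
    intervalIntegral.integral_nonneg htb fun y hy =>
      mul_nonneg (ht.trans hy.1) (hpY_nonneg y (ht.trans hy.1))
  have hnum_le : ∫ y in t..b, y * pY y ≤ b ^ 2 / 2 * pY t :=
    (intervalIntegral_id_mul_le_of_antitoneOn ht htb hpY_anti).trans
      (mul_le_mul_of_nonneg_right (by nlinarith) (hpY_nonneg t ht))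
  rw [hhY]
  exact ⟨div_nonneg hnum_nonneg (hpY_nonneg t ht),
    div_le_of_le_mul₀ (hpY_nonneg t ht) (by positivity) hnum_le⟩

/-- For a bounded mean zero `ε` with variance `σ² ∈ (0,∞)`, `E ε³ = 0`, supported in `[a,b]`
with `a < 0 < b`, the `ε`-zero bias density `pY y = σ⁻² E[ε 1(ε > y)]` and the function
`hY t = (∫_t^b y pY y dy)/pY t` satisfy `0 ≤ hY t ≤ b²/2` for all `t ∈ [0,b]`. -/
theorem hY_bounded_on_right
    {Ω : Type*} [MeasurableSpace Ω] (μ : Measure Ω) [IsProbabilityMeasure μ]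
    (ε : Ω → ℝ) (a b σ2 : ℝ) (ha : a < 0) (hb : 0 < b) (hσ2 : 0 < σ2)
    (hεm : Measurable ε)
    (hsupp : ∀ᵐ ω ∂μ, ε ω ∈ Set.Icc a b)
    (hmean : ∫ ω, ε ω ∂μ = 0)
    (hvar : ∫ ω, ε ω ^ 2 ∂μ = σ2)
    (h3 : ∫ ω, ε ω ^ 3 ∂μ = 0)
    (pY : ℝ → ℝ) (hpY : ∀ y, pY y = σ2⁻¹ * ∫ ω in {ω | y < ε ω}, ε ω ∂μ)
    (hY : ℝ → ℝ) (hhY : ∀ t, hY t = (∫ y in t..b, y * pY y) / pY t) :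
    ∀ t ∈ Set.Icc (0 : ℝ) b, 0 ≤ hY t ∧ hY t ≤ b ^ 2 / 2 :=
  hY_bounded_on_right_general μ ε a b σ2 hσ2 hεm hsupp pY hpY hY hhY
end

section
/- For every bounded random variable X with mean μ and support contained in an interval of length ℓ, if θ satisfies ℓ²θ² < 2, then for X₁, X₂, ... i.i.d. copies of X and Sₙ = X₁+⋯+Xₙ, one has E[exp(θ² Sₙ²/n)] ≤ (1 − ℓ²θ²/2)⁻¹ exp( n θ² μ² / (1 − ℓ²θ²/2) ) for all n ≥ 1. -/
open MeasureTheory ProbabilityTheory Real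
open scoped NNReal

/-!
By Hoeffding's lemma, `Sₙ - n m` is a sum of independent centred sub-Gaussian variables, hence
sub-Gaussian with variance proxy `b = n ℓ² / 4`. For any `Z` with
`E exp (t (Z - a)) ≤ exp (b t² / 2)` and `b < 1`, writing `exp (z² / 2)` as the Gaussian average
`E exp (z V)` and exchanging the two integrals gives
`E exp (Z² / 2) ≤ E exp (a V + b V² / 2) = (1 - b)^(-1/2) exp (a² / (2 (1 - b)))`.
Taking `Z = θ √(2 / n) Sₙ` yields the claim, even with the better factor `(1 - ℓ²θ²/2)^(-1/2)`.
-/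

theorem exp_mul_sub_mul_sq {q : ℝ} (hq : 0 < q) (a v : ℝ) :
    exp (a * v - q * v ^ 2) = exp (a ^ 2 / (4 * q)) * exp (-q * (v - a / (2 * q)) ^ 2) := by
  rw [← exp_add]
  congr 1
  field_simp
  ring

theorem integrable_exp_mul_sub_mul_sq {q : ℝ} (hq : 0 < q) (a : ℝ) :
    Integrable (fun v : ℝ ↦ exp (a * v - q * v ^ 2)) := by
  simp_rw [exp_mul_sub_mul_sq hq]
  exact ((integrable_exp_neg_mul_sq hq).comp_sub_right _).const_mul _

theorem lintegral_exp_mul_sub_mul_sq {q : ℝ} (hq : 0 < q) (a : ℝ) :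
    ∫⁻ v : ℝ, ENNReal.ofReal (exp (a * v - q * v ^ 2))
      = ENNReal.ofReal (√(π / q) * exp (a ^ 2 / (4 * q))) := by
  rw [← ofReal_integral_eq_lintegral_ofReal (integrable_exp_mul_sub_mul_sq hq a)
    (ae_of_all _ fun v ↦ (exp_pos _).le)]
  simp_rw [exp_mul_sub_mul_sq hq, integral_const_mul,
    integral_sub_right_eq_self (fun v ↦ exp (-q * v ^ 2)), integral_gaussian, mul_comm]

theorem lintegral_exp_mul_sub_half_mul_sq (z : ℝ) :
    ∫⁻ v : ℝ, ENNReal.ofReal (exp (z * v - 1 / 2 * v ^ 2))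
      = ENNReal.ofReal (√(2 * π) * exp (z ^ 2 / 2)) := by
  rw [lintegral_exp_mul_sub_mul_sq one_half_pos]
  congr 4 <;> ring

theorem hasSubgaussianMGF_sum_sub_of_identDistrib_of_mem_Icc {Ω ι : Type*} [MeasurableSpace Ω]
    {μ : Measure Ω} [IsProbabilityMeasure μ] {X : Ω → ℝ} {Xs : ι → Ω → ℝ} {c d : ℝ}
    (hX : AEMeasurable X μ) (hXcd : ∀ᵐ ω ∂μ, X ω ∈ Set.Icc c d)
    (hindep : iIndepFun Xs μ) (hid : ∀ i, IdentDistrib (Xs i) X μ μ) (s : Finset ι) :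
    HasSubgaussianMGF (fun ω ↦ ∑ i ∈ s, Xs i ω - s.card * μ[X])
      (s.card * (‖d - c‖₊ / 2) ^ 2) μ := by
  have hcentered := hasSubgaussianMGF_of_mem_Icc hX hXcd
  have hsum := HasSubgaussianMGF.sum_of_iIndepFun (s := s)
    (hindep.comp (fun _ x ↦ x - ∫ ω, X ω ∂μ) fun _ ↦ measurable_sub_const _)
    fun i _ ↦ hcentered.congr_identDistrib ((hid i).symm.comp (measurable_sub_const _))
  simpa only [Function.comp_apply, Finset.sum_sub_distrib, Finset.sum_const, nsmul_eq_mul]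
    using hsum

section

variable {Ω : Type*} [MeasurableSpace Ω] {μ : Measure Ω} {Z : Ω → ℝ} {a : ℝ} {b : ℝ≥0}

theorem lintegral_exp_mul_le_of_hasSubgaussianMGF_sub
    (hZ : HasSubgaussianMGF (fun ω ↦ Z ω - a) b μ) (t : ℝ) :
    ∫⁻ ω, ENNReal.ofReal (exp (t * Z ω)) ∂μ ≤ ENNReal.ofReal (exp (a * t + b * t ^ 2 / 2)) := by
  have hsplit (ω : Ω) : exp (t * Z ω) = exp (a * t) * exp (t * (Z ω - a)) := by
    rw [← exp_add]; ring_nf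
  simp_rw [hsplit, ENNReal.ofReal_mul (exp_pos _).le]
  rw [lintegral_const_mul' _ _ ENNReal.ofReal_ne_top,
    ← ofReal_integral_eq_lintegral_ofReal (hZ.integrable_exp_mul t)
      (ae_of_all _ fun ω ↦ (exp_pos _).le),
    ← ENNReal.ofReal_mul (exp_pos _).le, exp_add]
  exact ENNReal.ofReal_le_ofReal
    (mul_le_mul_of_nonneg_left (hZ.mgf_le t) (exp_pos _).le)

theorem integral_exp_sq_div_two_le_of_hasSubgaussianMGF_sub [SFinite μ] (hb : (b : ℝ) < 1)
    (hZ : HasSubgaussianMGF (fun ω ↦ Z ω - a) b μ) :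
    ∫ ω, exp (Z ω ^ 2 / 2) ∂μ ≤ (√(1 - b))⁻¹ * exp (a ^ 2 / (2 * (1 - b))) := by
  have hZm : AEMeasurable Z μ := by simpa using hZ.aemeasurable.add_const a
  have hb' : 0 < 1 - (b : ℝ) := by linarith
  have hinner (v : ℝ) : ∫⁻ ω, ENNReal.ofReal (exp (Z ω * v - 1 / 2 * v ^ 2)) ∂μ
      ≤ ENNReal.ofReal (exp (a * v - (1 - b) / 2 * v ^ 2)) := by
    have hsplit (ω : Ω) :
        exp (Z ω * v - 1 / 2 * v ^ 2) = exp (v * Z ω) * exp (-(1 / 2) * v ^ 2) := by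
      rw [← exp_add]; ring_nf
    simp_rw [hsplit, ENNReal.ofReal_mul (exp_pos _).le]
    rw [lintegral_mul_const' _ _ ENNReal.ofReal_ne_top]
    calc _ ≤ ENNReal.ofReal (exp (a * v + b * v ^ 2 / 2))
          * ENNReal.ofReal (exp (-(1 / 2) * v ^ 2)) :=
          mul_le_mul_left (lintegral_exp_mul_le_of_hasSubgaussianMGF_sub hZ v) _
      _ = _ := by rw [← ENNReal.ofReal_mul (exp_pos _).le, ← exp_add]; ring_nf
  have hbound : ENNReal.ofReal √(2 * π) * ∫⁻ ω, ENNReal.ofReal (exp (Z ω ^ 2 / 2)) ∂μ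
      ≤ ENNReal.ofReal √(2 * π) * ENNReal.ofReal ((√(1 - b))⁻¹ * exp (a ^ 2 / (2 * (1 - b)))) :=
    calc _ = ∫⁻ ω, (∫⁻ v : ℝ, ENNReal.ofReal (exp (Z ω * v - 1 / 2 * v ^ 2))) ∂μ := by
          rw [← lintegral_const_mul' _ _ ENNReal.ofReal_ne_top]
          simp_rw [← ENNReal.ofReal_mul (sqrt_nonneg _), lintegral_exp_mul_sub_half_mul_sq]
      _ = ∫⁻ v : ℝ, (∫⁻ ω, ENNReal.ofReal (exp (Z ω * v - 1 / 2 * v ^ 2)) ∂μ) :=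
          lintegral_lintegral_swap (by fun_prop)
      _ ≤ ∫⁻ v : ℝ, ENNReal.ofReal (exp (a * v - (1 - b) / 2 * v ^ 2)) := lintegral_mono hinner
      _ = _ := by
          rw [lintegral_exp_mul_sub_mul_sq (by linarith) a, ← ENNReal.ofReal_mul (sqrt_nonneg _),
            show π / ((1 - b) / 2) = 2 * π / (1 - b) by field_simp, sqrt_div' _ hb'.le]
          congr 1
          rw [show a ^ 2 / (4 * ((1 - b) / 2)) = a ^ 2 / (2 * (1 - b)) by ring]
          field_simp
  have hC : ENNReal.ofReal √(2 * π) ≠ 0 := by simp [pi_pos]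
  rw [integral_eq_lintegral_of_nonneg_ae (ae_of_all _ fun ω ↦ (exp_pos _).le) (by fun_prop)]
  exact ENNReal.toReal_le_of_le_ofReal (by positivity)
    ((ENNReal.mul_le_mul_iff_right hC ENNReal.ofReal_ne_top).1 hbound)

theorem integral_exp_mul_sq_div_two_le_of_hasSubgaussianMGF_sub [SFinite μ] {s : ℝ} (hs : 0 ≤ s)
    (hsb : s * b < 1) (hZ : HasSubgaussianMGF (fun ω ↦ Z ω - a) b μ) :
    ∫ ω, exp (s * Z ω ^ 2 / 2) ∂μ ≤ (√(1 - s * b))⁻¹ * exp (s * a ^ 2 / (2 * (1 - s * b))) := by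
  obtain ⟨b', hb', hscaled⟩ : ∃ b' : ℝ≥0, (b' : ℝ) = s * b ∧
      HasSubgaussianMGF (fun ω ↦ √s * Z ω - √s * a) b' μ :=
    ⟨_, by change √s ^ 2 * (b : ℝ) = _; rw [sq_sqrt hs],
      (hZ.const_mul √s).congr (ae_of_all _ fun ω ↦ mul_sub √s (Z ω) a)⟩
  have := integral_exp_sq_div_two_le_of_hasSubgaussianMGF_sub (hb' ▸ hsb) hscaled
  simpa only [hb', mul_pow, sq_sqrt hs] using this

end

theorem hoeffding_sum_square_mgf_general
    {Ω : Type*} [MeasurableSpace Ω] (μ : Measure Ω) [IsProbabilityMeasure μ]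
    (X : Ω → ℝ) (Xs : ℕ → Ω → ℝ) (m ℓ θ : ℝ)
    (hXm : Measurable X)
    (hbdd : ∃ c : ℝ, ∀ᵐ ω ∂μ, X ω ∈ Set.Icc c (c + ℓ))
    (hmean : ∫ ω, X ω ∂μ = m)
    (hiid : iIndepFun Xs μ)
    (hid : ∀ i, IdentDistrib (Xs i) X μ μ)
    (hθ : ℓ ^ 2 * θ ^ 2 < 2) :
    ∀ n : ℕ, 1 ≤ n →
      ∫ ω, Real.exp (θ ^ 2 * (∑ i ∈ Finset.range n, Xs i ω) ^ 2 / n) ∂μ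
        ≤ (1 - ℓ ^ 2 * θ ^ 2 / 2)⁻¹
            * Real.exp (n * θ ^ 2 * m ^ 2 / (1 - ℓ ^ 2 * θ ^ 2 / 2)) := by
  intro n hn
  obtain ⟨c, hc⟩ := hbdd
  have hS := hasSubgaussianMGF_sum_sub_of_identDistrib_of_mem_Icc hXm.aemeasurable hc hiid hid
    (Finset.range n)
  rw [Finset.card_range, hmean] at hS
  have hn0 : (n : ℝ) ≠ 0 := by positivity
  have hr : 0 < 1 - ℓ ^ 2 * θ ^ 2 / 2 := by linarith
  have hproxy : 2 * θ ^ 2 / n * ((n * (‖c + ℓ - c‖₊ / 2) ^ 2 : ℝ≥0) : ℝ) = ℓ ^ 2 * θ ^ 2 / 2 := by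
    push_cast [add_sub_cancel_left, Real.norm_eq_abs, div_pow, sq_abs]
    field_simp
  calc ∫ ω, exp (θ ^ 2 * (∑ i ∈ Finset.range n, Xs i ω) ^ 2 / n) ∂μ
      = ∫ ω, exp (2 * θ ^ 2 / n * (∑ i ∈ Finset.range n, Xs i ω) ^ 2 / 2) ∂μ := by
        congr with ω
        ring_nf
    _ ≤ _ := integral_exp_mul_sq_div_two_le_of_hasSubgaussianMGF_sub (by positivity)
        (by linarith) hS
    _ ≤ (1 - ℓ ^ 2 * θ ^ 2 / 2)⁻¹ * exp (n * θ ^ 2 * m ^ 2 / (1 - ℓ ^ 2 * θ ^ 2 / 2)) := by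
        rw [hproxy, show 2 * θ ^ 2 / n * (n * m) ^ 2 / (2 * (1 - ℓ ^ 2 * θ ^ 2 / 2))
          = n * θ ^ 2 * m ^ 2 / (1 - ℓ ^ 2 * θ ^ 2 / 2) by field_simp]
        gcongr
        exact le_sqrt_self_iff.2 (sub_le_self _ (by positivity))

/-- For a bounded random variable `X` with mean `m` supported in an interval of length `ℓ`,
if `ℓ²θ² < 2`, then for i.i.d. copies `Xs 0, Xs 1, ...` of `X` and `Sₙ = Σ_{i<n} Xs i`,
`E[exp(θ² Sₙ²/n)] ≤ (1 − ℓ²θ²/2)⁻¹ exp(n θ² m² / (1 − ℓ²θ²/2))` for all `n ≥ 1`. -/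
theorem hoeffding_sum_square_mgf
    {Ω : Type*} [MeasurableSpace Ω] (μ : Measure Ω) [IsProbabilityMeasure μ]
    (X : Ω → ℝ) (Xs : ℕ → Ω → ℝ) (m ℓ θ : ℝ) (hℓ : 0 ≤ ℓ)
    (hXm : Measurable X) (hXsm : ∀ i, Measurable (Xs i))
    (hbdd : ∃ c : ℝ, ∀ᵐ ω ∂μ, X ω ∈ Set.Icc c (c + ℓ))
    (hmean : ∫ ω, X ω ∂μ = m)
    (hiid : iIndepFun Xs μ)
    (hid : ∀ i, IdentDistrib (Xs i) X μ μ)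
    (hθ : ℓ ^ 2 * θ ^ 2 < 2) :
    ∀ n : ℕ, 1 ≤ n →
      ∫ ω, Real.exp (θ ^ 2 * (∑ i ∈ Finset.range n, Xs i ω) ^ 2 / n) ∂μ
        ≤ (1 - ℓ ^ 2 * θ ^ 2 / 2)⁻¹
            * Real.exp (n * θ ^ 2 * m ^ 2 / (1 - ℓ ^ 2 * θ ^ 2 / 2)) :=
  hoeffding_sum_square_mgf_general μ X Xs m ℓ θ hXm hbdd hmean hiid hid hθ
end

section
/- Let ε₁,...,εₙ be elements of a finite set 𝒜 ⊂ ℝ, π a uniform random permutation of {1,...,n}, B = max_{a∈𝒜} |a|, and W_k = Σ_{i=1}^k ε_{π(i)} − (k/n) Σ_{i=1}^n ε_{π(i)}. Then for all θ ∈ ℝ and 1 ≤ k ≤ n, E[exp(θ W_k/√k)] ≤ exp(B² θ²). -/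
/-!
For `i ∈ S` and `j ∉ S`, the pair `(π, π * swap i j)` is exchangeable and moves
`W = ∑_{i ∈ S} ε_{π i} - (#S/n) ∑ ε_{π i}` by `ε_{π i} - ε_{π j}`, at most `2B` in absolute value.
Summing over all such pairs gives `n · E[W e^{sW}] = ∑_{i,j} E[(W - W') e^{sW}]`, and each term is
`½ E[(W - W')(e^{sW} - e^{sW'})] ≤ 2sB² E[e^{sW}]` by `|eˣ - eʸ| ≤ |x - y| (eˣ + eʸ)/2`.
Hence `m(s) = E[e^{sW}]` satisfies `m' ≤ 2B²#S s m` on `s ≥ 0`, so `m(s) ≤ exp(B² #S s²)`;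
take `s = θ/√#S`, and `ε ↦ -ε` for `θ < 0`.
-/

open Finset Function

section

open Real

theorem exp_sub_one_le_mul_exp_add_one_div_two {u : ℝ} (hu : 0 ≤ u) :
    exp u - 1 ≤ u * (exp u + 1) / 2 := by
  let g : ℝ → ℝ := fun u => u * (exp u + 1) / 2 - (exp u - 1)
  have hg : ∀ t, HasDerivAt g ((exp t + 1 + t * exp t) / 2 - exp t) t := fun t => by
    simpa using (((hasDerivAt_id t).mul ((hasDerivAt_exp t).add_const 1)).div_const 2).fun_sub
      ((hasDerivAt_exp t).sub_const 1)
  have hmono : MonotoneOn g (Set.Ici 0) := by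
    refine monotoneOn_of_hasDerivWithinAt_nonneg (convex_Ici 0)
      (fun t _ => (hg t).continuousAt.continuousWithinAt) (fun t _ => (hg t).hasDerivWithinAt)
      fun t _ => ?_
    -- `exp t * (t - 1) + 1 ≥ 0` is `exp (-t) ≥ 1 - t` multiplied by `exp t`
    have h1 := add_one_le_exp (-t)
    have h2 : exp t * exp (-t) = 1 := by rw [← exp_add, add_neg_cancel, exp_zero]
    nlinarith [exp_pos t]
  have := hmono Set.self_mem_Ici hu hu
  simp only [g, zero_mul, exp_zero] at this
  linarith

theorem abs_exp_sub_exp_le (x y : ℝ) :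
    |exp x - exp y| ≤ |x - y| * (exp x + exp y) / 2 := by
  wlog hyx : y ≤ x generalizing x y
  · rw [abs_sub_comm, abs_sub_comm x, add_comm]
    exact this y x (le_of_not_ge hyx)
  have hsplit : exp x = exp y * exp (x - y) := by rw [← exp_add, add_sub_cancel]
  have key := mul_le_mul_of_nonneg_left
    (exp_sub_one_le_mul_exp_add_one_div_two (sub_nonneg.2 hyx)) (exp_pos y).le
  rw [abs_of_nonneg (sub_nonneg.2 (exp_le_exp.2 hyx)), abs_of_nonneg (sub_nonneg.2 hyx), hsplit]
  linarith

theorem le_mul_exp_sq_of_hasDerivAt {f f' : ℝ → ℝ} {C : ℝ} (hf : ∀ t, HasDerivAt f (f' t) t)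
    (hf' : ∀ t, 0 ≤ t → f' t ≤ 2 * C * t * f t) {t : ℝ} (ht : 0 ≤ t) :
    f t ≤ f 0 * exp (C * t ^ 2) := by
  let g : ℝ → ℝ := fun t => f t * exp (-C * t ^ 2)
  have hg : ∀ t, HasDerivAt g ((f' t - 2 * C * t * f t) * exp (-C * t ^ 2)) t := fun t => by
    refine ((hf t).fun_mul ((hasDerivAt_pow 2 t).const_mul (-C)).exp).congr_deriv ?_
    push_cast; ring
  have hanti : AntitoneOn g (Set.Ici 0) :=
    antitoneOn_of_hasDerivWithinAt_nonpos (convex_Ici 0)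
      (fun t _ => (hg t).continuousAt.continuousWithinAt) (fun t _ => (hg t).hasDerivWithinAt)
      fun s hs => mul_nonpos_of_nonpos_of_nonneg
        (sub_nonpos.2 (hf' s (interior_subset hs))) (exp_pos _).le
  have h := hanti Set.self_mem_Ici ht ht
  simp only [g, ne_eq, OfNat.ofNat_ne_zero, not_false_eq_true, zero_pow, mul_zero, exp_zero,
    mul_one] at h
  calc f t = g t * exp (C * t ^ 2) := by
        simp only [g, mul_assoc, ← exp_add, neg_mul, neg_add_cancel, exp_zero, mul_one]
    _ ≤ f 0 * exp (C * t ^ 2) := mul_le_mul_of_nonneg_right h (exp_pos _).le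

section Exchangeable

variable {α : Type*} [Fintype α] {τ : α → α}

theorem two_mul_sum_sub_comp_mul (hτ : Involutive τ) (f g : α → ℝ) :
    2 * ∑ a, (f a - f (τ a)) * g a = ∑ a, (f a - f (τ a)) * (g a - g (τ a)) := by
  have hswap : ∑ a, (f a - f (τ a)) * g a = ∑ a, (f (τ a) - f a) * g (τ a) :=
    Fintype.sum_equiv (hτ.toPerm τ) _ _ fun a => by simp only [Involutive.coe_toPerm, hτ a]
  rw [two_mul]
  nth_rw 2 [hswap]
  rw [← sum_add_distrib]
  exact sum_congr rfl fun a _ => by ring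

theorem sum_sub_comp_mul_exp_le (hτ : Involutive τ) {f : α → ℝ} {s D : ℝ} (hs : 0 ≤ s)
    (hD : ∀ a, |f a - f (τ a)| ≤ D) :
    ∑ a, (f a - f (τ a)) * exp (s * f a) ≤ s * D ^ 2 / 2 * ∑ a, exp (s * f a) := by
  have hpair : ∀ a, (f a - f (τ a)) * (exp (s * f a) - exp (s * f (τ a)))
      ≤ s * D ^ 2 / 2 * (exp (s * f a) + exp (s * f (τ a))) := fun a => by
    have hexp := abs_exp_sub_exp_le (s * f a) (s * f (τ a))
    rw [← mul_sub, abs_mul, abs_of_nonneg hs] at hexp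
    have hsq : |f a - f (τ a)| ^ 2 ≤ D ^ 2 := pow_le_pow_left₀ (abs_nonneg _) (hD a) 2
    calc (f a - f (τ a)) * (exp (s * f a) - exp (s * f (τ a)))
        ≤ |f a - f (τ a)| * |exp (s * f a) - exp (s * f (τ a))| := by
          rw [← abs_mul]; exact le_abs_self _
      _ ≤ |f a - f (τ a)| * (s * |f a - f (τ a)| * (exp (s * f a) + exp (s * f (τ a))) / 2) :=
          mul_le_mul_of_nonneg_left hexp (abs_nonneg _)
      _ = s * |f a - f (τ a)| ^ 2 / 2 * (exp (s * f a) + exp (s * f (τ a))) := by ring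
      _ ≤ s * D ^ 2 / 2 * (exp (s * f a) + exp (s * f (τ a))) := by gcongr
  have hsum := sum_le_sum fun a (_ : a ∈ univ) => hpair a
  rw [← two_mul_sum_sub_comp_mul hτ, ← mul_sum, sum_add_distrib,
    Fintype.sum_equiv (hτ.toPerm τ) (fun a => exp (s * f (τ a))) (fun a => exp (s * f a))
      fun _ => rfl] at hsum
  linarith

end Exchangeable

section CenteredPartialSum

variable {ι : Type*} [Fintype ι] (S : Finset ι)

noncomputable def centeredPartialSum (x : ι → ℝ) : ℝ :=
  ∑ i ∈ S, x i - (#S / Fintype.card ι : ℝ) * ∑ i, x i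

theorem centeredPartialSum_neg (x : ι → ℝ) :
    centeredPartialSum S (fun i => -x i) = -centeredPartialSum S x := by
  simp only [centeredPartialSum, sum_neg_distrib]
  ring

variable [DecidableEq ι]

theorem centeredPartialSum_comp_swap (x : ι → ℝ) {i j : ι} (hi : i ∈ S) (hj : j ∉ S) :
    centeredPartialSum S (x ∘ Equiv.swap i j) = centeredPartialSum S x - x i + x j := by
  have hS : ∑ l ∈ S, (x (Equiv.swap i j l) - x l) = x j - x i := by
    refine (sum_eq_single_of_mem i hi fun l hl hli => ?_).trans (by simp)
    rw [Equiv.swap_apply_of_ne_of_ne hli (ne_of_mem_of_not_mem hl hj), sub_self]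
  have huniv : ∑ l, x (Equiv.swap i j l) = ∑ l, x l := Equiv.sum_comp _ x
  rw [sum_sub_distrib] at hS
  simp only [centeredPartialSum, comp_apply, huniv]
  linarith

theorem sum_product_compl_sub [Nonempty ι] (x : ι → ℝ) :
    ∑ q ∈ S ×ˢ Sᶜ, (x q.1 - x q.2) = Fintype.card ι * centeredPartialSum S x := by
  have hcard : (#Sᶜ : ℝ) = Fintype.card ι - #S := by
    rw [card_compl, Nat.cast_sub (card_le_univ S)]
  have hsplit : ∑ i ∈ Sᶜ, x i = ∑ i, x i - ∑ i ∈ S, x i := by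
    rw [← sum_add_sum_compl S x]; ring
  have hn : (Fintype.card ι : ℝ) ≠ 0 := Nat.cast_ne_zero.2 Fintype.card_ne_zero
  simp only [sum_product, sum_sub_distrib, sum_const, nsmul_eq_mul, ← mul_sum]
  rw [hcard, hsplit, centeredPartialSum]
  field_simp
  ring

variable {S}

theorem sum_centeredPartialSum_mul_exp_le [Nonempty ι] {ε : ι → ℝ} {B s : ℝ}
    (hε : ∀ i, |ε i| ≤ B) (hs : 0 ≤ s) :
    ∑ p : Equiv.Perm ι, centeredPartialSum S (ε ∘ p) * exp (s * centeredPartialSum S (ε ∘ p))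
      ≤ 2 * s * B ^ 2 * #S * ∑ p : Equiv.Perm ι, exp (s * centeredPartialSum S (ε ∘ p)) := by
  set W : Equiv.Perm ι → ℝ := fun p => centeredPartialSum S (ε ∘ p)
  set E := ∑ p, exp (s * W p)
  have hW : ∀ q ∈ S ×ˢ Sᶜ, ∀ p,
      W p - W (p * Equiv.swap q.1 q.2) = ε (p q.1) - ε (p q.2) := by
    rintro ⟨i, j⟩ hq p
    obtain ⟨hi, hj⟩ := mem_product.1 hq
    simp only [W, Equiv.Perm.coe_mul, ← comp_assoc,
      centeredPartialSum_comp_swap S _ hi (mem_compl.1 hj), comp_apply]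
    ring
  have hpair : ∀ q ∈ S ×ˢ Sᶜ,
      ∑ p, (W p - W (p * Equiv.swap q.1 q.2)) * exp (s * W p) ≤ 2 * s * B ^ 2 * E := by
    intro q hq
    have hτ : Involutive fun p : Equiv.Perm ι => p * Equiv.swap q.1 q.2 := fun p => by
      simp only [mul_assoc, Equiv.swap_mul_self, mul_one]
    refine (sum_sub_comp_mul_exp_le (D := 2 * B) hτ hs fun p => ?_).trans_eq (by ring)
    rw [hW q hq]
    exact (abs_sub _ _).trans (by linarith [hε (p q.1), hε (p q.2)])
  have hsum : Fintype.card ι * ∑ p, W p * exp (s * W p)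
      = ∑ q ∈ S ×ˢ Sᶜ, ∑ p, (W p - W (p * Equiv.swap q.1 q.2)) * exp (s * W p) := by
    rw [sum_comm, mul_sum]
    refine sum_congr rfl fun p _ => ?_
    rw [← sum_mul, sum_congr rfl fun q hq => hW q hq p, sum_product_compl_sub S fun i => ε (p i),
      mul_assoc]
    rfl
  have hn : (0 : ℝ) < Fintype.card ι := Nat.cast_pos.2 Fintype.card_pos
  have hcard : (#(S ×ˢ Sᶜ) : ℝ) ≤ #S * Fintype.card ι := by
    rw [card_product, Nat.cast_mul]
    gcongr
    exact_mod_cast card_le_univ _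
  have hE : 0 ≤ 2 * s * B ^ 2 * E := by positivity
  have hbound := (sum_le_sum hpair).trans_eq (sum_const _)
  rw [← hsum, nsmul_eq_mul] at hbound
  nlinarith [mul_le_mul_of_nonneg_right hcard hE]

end CenteredPartialSum

theorem sum_exp_centeredPartialSum_le {ι : Type*} [Fintype ι] [DecidableEq ι] {S : Finset ι}
    (hS : S.Nonempty) {ε : ι → ℝ} {B : ℝ} (hε : ∀ i, |ε i| ≤ B) (θ : ℝ) :
    ∑ p : Equiv.Perm ι, exp (θ * centeredPartialSum S (ε ∘ p) / √(#S : ℝ))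
      ≤ (Fintype.card ι).factorial * exp (B ^ 2 * θ ^ 2) := by
  wlog hθ : 0 ≤ θ generalizing ε θ
  · have h := this (ε := fun i => -ε i) (fun i => (abs_neg _).trans_le (hε i)) (-θ) (by linarith)
    simp only [comp_def, centeredPartialSum_neg, neg_mul_neg, neg_sq] at h
    simpa only [comp_def] using h
  have := hS.to_type
  set W : Equiv.Perm ι → ℝ := fun p => centeredPartialSum S (ε ∘ p)
  set f : ℝ → ℝ := fun t => ∑ p, exp (t * W p)
  have hf : ∀ t, HasDerivAt f (∑ p, W p * exp (t * W p)) t := fun t =>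
    HasDerivAt.fun_sum fun p _ => (hasDerivAt_mul_const (W p)).exp.congr_deriv (mul_comm _ _)
  have hf' : ∀ t, 0 ≤ t → ∑ p, W p * exp (t * W p) ≤ 2 * (B ^ 2 * #S) * t * f t := fun t ht =>
    (sum_centeredPartialSum_mul_exp_le hε ht).trans_eq (by ring)
  have hk : 0 < √(#S : ℝ) := Real.sqrt_pos.2 (Nat.cast_pos.2 hS.card_pos)
  have hf0 : f 0 = (Fintype.card ι).factorial := by simp [f, Fintype.card_perm]
  have hexp : B ^ 2 * #S * (θ / √(#S : ℝ)) ^ 2 = B ^ 2 * θ ^ 2 := by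
    rw [div_pow, Real.sq_sqrt (Nat.cast_nonneg _)]
    field_simp
  calc ∑ p, exp (θ * W p / √(#S : ℝ)) = f (θ / √(#S : ℝ)) := sum_congr rfl fun p _ => by ring_nf
    _ ≤ f 0 * exp (B ^ 2 * #S * (θ / √(#S : ℝ)) ^ 2) :=
      le_mul_exp_sq_of_hasDerivAt hf hf' (div_nonneg hθ hk.le)
    _ = (Fintype.card ι).factorial * exp (B ^ 2 * θ ^ 2) := by rw [hf0, hexp]

end

theorem mgf_Wk_bound_general (n : ℕ) (𝒜 : Finset ℝ) (h𝒜 : 𝒜.Nonempty)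
    (ε : Fin n → ℝ) (hε : ∀ i, ε i ∈ 𝒜) (B : ℝ) (hB : B = 𝒜.sup' h𝒜 fun a => |a|)
    (θ : ℝ) (k : ℕ) (hk1 : 1 ≤ k) (hkn : k ≤ n) :
    (∑ π : Equiv.Perm (Fin n), Real.exp (θ *
        ((∑ i ∈ Finset.univ.filter (fun i : Fin n => (i : ℕ) < k), ε (π i))
          - (k / n : ℝ) * ∑ i, ε (π i)) / Real.sqrt k))
        / (Nat.factorial n : ℝ)
      ≤ Real.exp (B ^ 2 * θ ^ 2) := by
  set S := Finset.univ.filter fun i : Fin n => (i : ℕ) < k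
  have hS : #S = k := by rw [Fin.card_filter_val_lt, min_eq_right hkn]
  have hSne : S.Nonempty := card_pos.1 (hS ▸ hk1)
  have hεB : ∀ i, |ε i| ≤ B := fun i => hB ▸ le_sup' (fun a => |a|) (hε i)
  have h := sum_exp_centeredPartialSum_le hSne hεB θ
  simp only [centeredPartialSum, hS, Fintype.card_fin, comp_apply] at h
  rw [div_le_iff₀ (by positivity), mul_comm]
  exact h

/-- For `ε₁,...,εₙ` taking values in a finite set `𝒜`, `B = max_{a ∈ 𝒜} |a|`, a uniform
random permutation `π`, and `W_k = Σ_{i ≤ k} ε_{π(i)} − (k/n) Σᵢ ε_{π(i)}`, one has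
`E[exp(θ W_k/√k)] ≤ exp(B² θ²)` for all `θ ∈ ℝ` and `1 ≤ k ≤ n`. -/
theorem mgf_Wk_bound (n : ℕ) (hn : 0 < n) (𝒜 : Finset ℝ) (h𝒜 : 𝒜.Nonempty)
    (ε : Fin n → ℝ) (hε : ∀ i, ε i ∈ 𝒜) (B : ℝ) (hB : B = 𝒜.sup' h𝒜 fun a => |a|)
    (θ : ℝ) (k : ℕ) (hk1 : 1 ≤ k) (hkn : k ≤ n) :
    (∑ π : Equiv.Perm (Fin n), Real.exp (θ *
        ((∑ i ∈ Finset.univ.filter (fun i : Fin n => (i : ℕ) < k), ε (π i))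
          - (k / n : ℝ) * ∑ i, ε (π i)) / Real.sqrt k))
        / (Nat.factorial n : ℝ)
      ≤ Real.exp (B ^ 2 * θ ^ 2) :=
  mgf_Wk_bound_general n 𝒜 h𝒜 ε hε B hB θ k hk1 hkn
end

section
/- Let ε₁,...,εₙ be elements of a finite set 𝒜 ⊂ ℝ with B = max_{a∈𝒜}|a|, π a uniform random permutation, Sₙ = Σ εᵢ (nonrandom), S_k = Σ_{i=1}^k ε_{π(i)}. Then for 1 ≤ k ≤ 2n/3 and 0 < α < 1/(4B²), E[exp(α S_k²/k)] ≤ (1 − 4αB²)^{-1/2} exp( α k Sₙ² / ((1 − 4αB²) n²) ). -/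
/-!
Write `x i = exp (u ε i)`. Averaged over permutations, `exp (u S_k)` is a product of `k` values
of `x` drawn without replacement. Exchanging one draw with an undrawn index, or with an already
drawn one and then using AM-GM, shows that each draw contributes at most the mean of `x`; so
`E exp (u S_k) ≤ (mean x) ^ k ≤ exp (k (u Sₙ / n + B² u² / 2))` by Hoeffding's lemma
(the theorem uses the weaker `B² u²`, whence the constant `4 α B²`).
For a standard Gaussian `Z`, `exp (β s²) = E exp (√(2β) s Z)`; with `β = α / k` this turns the
bound on `E exp (u S_k)` into one on `E exp (a Z² + b Z)`, a Gaussian integral in closed form.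
-/

open Finset MeasureTheory ProbabilityTheory Equiv

section Exchangeable

variable {ι : Type*} [Fintype ι] [DecidableEq ι] {x : ι → ℝ} {Q : Finset ι} {a : ι}

lemma sum_perm_prod_mul_apply_eq_of_notMem {m : ι} (ha : a ∉ Q) (hm : m ∉ Q) :
    ∑ σ : Perm ι, (∏ j ∈ Q, x (σ j)) * x (σ m)
      = ∑ σ : Perm ι, (∏ j ∈ Q, x (σ j)) * x (σ a) := by
  rw [← Equiv.sum_comp (Equiv.mulRight (swap a m))]
  refine sum_congr rfl fun σ _ => ?_
  have hfix : ∀ j ∈ Q, (σ * swap a m) j = σ j := fun j hj => by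
    rw [Perm.mul_apply,
      swap_apply_of_ne_of_ne (ne_of_mem_of_not_mem hj ha) (ne_of_mem_of_not_mem hj hm)]
  show (∏ j ∈ Q, x ((σ * swap a m) j)) * x ((σ * swap a m) m) = _
  rw [prod_congr rfl fun j hj => congrArg x (hfix j hj), Perm.mul_apply, swap_apply_right]

lemma sum_perm_prod_mul_apply_le_of_mem (hx : ∀ i, 0 ≤ x i) {i : ι} (ha : a ∉ Q) (hi : i ∈ Q) :
    ∑ σ : Perm ι, (∏ j ∈ Q, x (σ j)) * x (σ a)
      ≤ ∑ σ : Perm ι, (∏ j ∈ Q, x (σ j)) * x (σ i) := by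
  set g : Perm ι → ℝ := fun σ => ∏ j ∈ Q.erase i, x (σ j)
  have hQ : ∀ σ : Perm ι, ∏ j ∈ Q, x (σ j) = g σ * x (σ i) :=
    fun σ => (prod_erase_mul Q _ hi).symm
  have hswap : ∑ σ : Perm ι, g σ * x (σ a) ^ 2 = ∑ σ : Perm ι, g σ * x (σ i) ^ 2 := by
    rw [← Equiv.sum_comp (Equiv.mulRight (swap i a))]
    refine sum_congr rfl fun σ _ => ?_
    have hfix : ∀ j ∈ Q.erase i, (σ * swap i a) j = σ j := fun j hj => by
      rw [Perm.mul_apply, swap_apply_of_ne_of_ne (ne_of_mem_erase hj)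
        (ne_of_mem_of_not_mem (mem_of_mem_erase hj) ha)]
    show (∏ j ∈ Q.erase i, x ((σ * swap i a) j)) * x ((σ * swap i a) a) ^ 2 = _
    rw [prod_congr rfl fun j hj => congrArg x (hfix j hj), Perm.mul_apply, swap_apply_right]
  have hamgm : ∀ σ : Perm ι,
      2 * (g σ * x (σ i) * x (σ a)) ≤ g σ * x (σ a) ^ 2 + g σ * x (σ i) ^ 2 := fun σ => by
    have : 0 ≤ g σ := prod_nonneg fun j _ => hx _
    nlinarith [mul_nonneg this (sq_nonneg (x (σ i) - x (σ a)))]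
  have hsum := sum_le_sum fun σ (_ : σ ∈ univ) => hamgm σ
  rw [← mul_sum, sum_add_distrib, hswap] at hsum
  simp only [hQ]
  calc ∑ σ : Perm ι, g σ * x (σ i) * x (σ a) ≤ ∑ σ : Perm ι, g σ * x (σ i) ^ 2 := by linarith
    _ = ∑ σ : Perm ι, g σ * x (σ i) * x (σ i) := sum_congr rfl fun σ _ => by ring

lemma card_mul_sum_perm_prod_mul_apply_le (hx : ∀ i, 0 ≤ x i) (ha : a ∉ Q) :
    Fintype.card ι * ∑ σ : Perm ι, (∏ j ∈ Q, x (σ j)) * x (σ a)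
      ≤ (∑ i, x i) * ∑ σ : Perm ι, ∏ j ∈ Q, x (σ j) := by
  have hterm : ∀ m : ι, ∑ σ : Perm ι, (∏ j ∈ Q, x (σ j)) * x (σ a)
      ≤ ∑ σ : Perm ι, (∏ j ∈ Q, x (σ j)) * x (σ m) := fun m => by
    by_cases hm : m ∈ Q
    · exact sum_perm_prod_mul_apply_le_of_mem hx ha hm
    · exact (sum_perm_prod_mul_apply_eq_of_notMem ha hm).ge
  calc Fintype.card ι * ∑ σ : Perm ι, (∏ j ∈ Q, x (σ j)) * x (σ a)
      = ∑ m : ι, ∑ σ : Perm ι, (∏ j ∈ Q, x (σ j)) * x (σ a) := by simp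
    _ ≤ ∑ m : ι, ∑ σ : Perm ι, (∏ j ∈ Q, x (σ j)) * x (σ m) := sum_le_sum fun m _ => hterm m
    _ = ∑ σ : Perm ι, (∏ j ∈ Q, x (σ j)) * ∑ m : ι, x (σ m) := by
        rw [sum_comm]; simp only [mul_sum]
    _ = (∑ i, x i) * ∑ σ : Perm ι, ∏ j ∈ Q, x (σ j) := by
        simp only [Equiv.sum_comp, mul_sum, mul_comm]

theorem sum_perm_prod_apply_le (hx : ∀ i, 0 ≤ x i) (P : Finset ι) :
    ∑ σ : Perm ι, ∏ i ∈ P, x (σ i)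
      ≤ (Fintype.card ι).factorial * ((∑ i, x i) / Fintype.card ι) ^ #P := by
  induction P using Finset.induction_on with
  | empty => simp [Fintype.card_perm]
  | insert a Q ha ih =>
    have hn : (0 : ℝ) < Fintype.card ι := by
      have : Nonempty ι := ⟨a⟩
      exact_mod_cast Fintype.card_pos
    have hmean : 0 ≤ (∑ i, x i) / Fintype.card ι :=
      div_nonneg (sum_nonneg fun i _ => hx i) hn.le
    rw [card_insert_of_notMem ha, pow_succ]
    calc ∑ σ : Perm ι, ∏ i ∈ insert a Q, x (σ i)
        = ∑ σ : Perm ι, (∏ j ∈ Q, x (σ j)) * x (σ a) := by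
          simp only [prod_insert ha, mul_comm (x _)]
      _ ≤ (∑ i, x i) / Fintype.card ι * ∑ σ : Perm ι, ∏ j ∈ Q, x (σ j) := by
          rw [div_mul_eq_mul_div, le_div_iff₀' hn]
          exact card_mul_sum_perm_prod_mul_apply_le hx ha
      _ ≤ (∑ i, x i) / Fintype.card ι *
            ((Fintype.card ι).factorial * ((∑ i, x i) / Fintype.card ι) ^ #Q) :=
          mul_le_mul_of_nonneg_left ih hmean
      _ = _ := by ring

end Exchangeable

section

open Real

lemma integral_uniformOn_univ {Ω : Type*} [Fintype Ω] [MeasurableSpace Ω]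
    [MeasurableSingletonClass Ω] (f : Ω → ℝ) :
    ∫ ω, f ω ∂uniformOn (Set.univ : Set Ω) = (∑ ω, f ω) / Fintype.card Ω := by
  rw [integral_fintype .of_finite]
  simp [measureReal_def, uniformOn_univ, div_eq_inv_mul, Finset.mul_sum]

lemma sum_exp_mul_div_card_le {ι : Type*} [Fintype ι] [Nonempty ι] {ε : ι → ℝ} {B : ℝ}
    (hε : ∀ i, |ε i| ≤ B) (u : ℝ) :
    (∑ i, exp (u * ε i)) / Fintype.card ι
      ≤ exp (u * ((∑ i, ε i) / Fintype.card ι) + B ^ 2 * u ^ 2 / 2) := by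
  let _ : MeasurableSpace ι := ⊤
  have : MeasurableSingletonClass ι := ⟨fun _ => trivial⟩
  have h := (hasSubgaussianMGF_of_mem_Icc (μ := uniformOn (Set.univ : Set ι))
    (measurable_of_countable ε).aemeasurable (ae_of_all _ fun i => abs_le.mp (hε i))).mgf_le u
  simp only [mgf, integral_uniformOn_univ] at h
  set m := (∑ i, ε i) / Fintype.card ι
  have hB : ((‖B - -B‖₊ / 2) ^ 2 : NNReal) = (B ^ 2 : ℝ) := by
    push_cast
    simp [← two_mul]
  have hcenter : ∑ i, exp (u * (ε i - m)) = exp (-(u * m)) * ∑ i, exp (u * ε i) := by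
    rw [mul_sum]
    exact sum_congr rfl fun i _ => by rw [← exp_add]; ring_nf
  rw [hB, hcenter, mul_div_assoc, ← le_div_iff₀' (exp_pos _), ← exp_sub] at h
  exact h.trans_eq (by congr 1; ring)

theorem sum_perm_exp_mul_sum_le {ι : Type*} [Fintype ι] [DecidableEq ι] [Nonempty ι]
    {ε : ι → ℝ} {B : ℝ} (hε : ∀ i, |ε i| ≤ B) (P : Finset ι) (u : ℝ) :
    ∑ σ : Perm ι, exp (u * ∑ i ∈ P, ε (σ i))
      ≤ (Fintype.card ι).factorial
          * exp (#P * (u * ((∑ i, ε i) / Fintype.card ι) + B ^ 2 * u ^ 2 / 2)) := by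
  simp only [mul_sum, exp_sum]
  refine (sum_perm_prod_apply_le (fun i => (exp_pos (u * ε i)).le) P).trans ?_
  rw [exp_nat_mul]
  gcongr
  exact sum_exp_mul_div_card_le hε u

lemma integrable_exp_neg_mul_sq_add_mul {b : ℝ} (hb : 0 < b) (c : ℝ) :
    Integrable fun z : ℝ => exp (-b * z ^ 2 + c * z) := by
  refine (((integrable_exp_neg_mul_sq hb).comp_sub_right (c / (2 * b))).mul_const
    (exp (c ^ 2 / (4 * b)))).congr (Filter.Eventually.of_forall fun z => ?_)
  simp only [← exp_add]
  congr 1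
  field_simp
  ring

lemma integral_exp_neg_mul_sq_add_mul {b : ℝ} (hb : 0 < b) (c : ℝ) :
    ∫ z : ℝ, exp (-b * z ^ 2 + c * z) = √(π / b) * exp (c ^ 2 / (4 * b)) := by
  have hsquare : ∀ z : ℝ, exp (-b * z ^ 2 + c * z)
      = exp (-b * (z - c / (2 * b)) ^ 2) * exp (c ^ 2 / (4 * b)) := fun z => by
    rw [← exp_add]
    congr 1
    field_simp
    ring
  simp_rw [hsquare]
  rw [integral_mul_const, integral_sub_right_eq_self (fun z => exp (-b * z ^ 2)),
    integral_gaussian]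

theorem sum_exp_mul_sq_le {J : Type*} [Fintype J] (S : J → ℝ) {N a c β : ℝ} (hβ : 0 < β)
    (hc : 4 * β * c < 1) (h : ∀ u, ∑ j, exp (u * S j) ≤ N * exp (a * u + c * u ^ 2)) :
    ∑ j, exp (β * S j ^ 2) ≤ N * (√(1 - 4 * β * c))⁻¹ * exp (β * a ^ 2 / (1 - 4 * β * c)) := by
  obtain ⟨b, hb, hb4⟩ : ∃ b, 0 < b ∧ 4 * β * b = 1 :=
    ⟨(4 * β)⁻¹, by positivity, mul_inv_cancel₀ (by positivity)⟩
  have hbc_eq : b - c = b * (1 - 4 * β * c) := by linear_combination c * hb4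
  have hc' : 0 < 1 - 4 * β * c := by linarith
  have hbc : 0 < b - c := hbc_eq ▸ mul_pos hb hc'
  have hlin : ∀ s, exp (β * s ^ 2) = (√(π / b))⁻¹ * ∫ z, exp (-b * z ^ 2 + s * z) := fun s => by
    rw [integral_exp_neg_mul_sq_add_mul hb, ← mul_assoc,
      inv_mul_cancel₀ (sqrt_pos.mpr (by positivity)).ne', one_mul]
    congr 1
    field_simp
    linear_combination s ^ 2 * hb4
  have hpointwise : ∀ z, ∑ j, exp (-b * z ^ 2 + S j * z)
      ≤ N * exp (-(b - c) * z ^ 2 + a * z) := fun z => by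
    calc ∑ j, exp (-b * z ^ 2 + S j * z) = exp (-b * z ^ 2) * ∑ j, exp (z * S j) := by
          rw [mul_sum]
          exact sum_congr rfl fun j _ => by rw [← exp_add, mul_comm (S j)]
      _ ≤ exp (-b * z ^ 2) * (N * exp (a * z + c * z ^ 2)) :=
          mul_le_mul_of_nonneg_left (h z) (exp_pos _).le
      _ = N * exp (-(b - c) * z ^ 2 + a * z) := by
          rw [mul_left_comm, ← exp_add]; ring_nf
  have hint : ∫ z, ∑ j, exp (-b * z ^ 2 + S j * z) ≤ ∫ z, N * exp (-(b - c) * z ^ 2 + a * z) :=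
    integral_mono (integrable_finsetSum _ fun j _ => integrable_exp_neg_mul_sq_add_mul hb (S j))
      ((integrable_exp_neg_mul_sq_add_mul hbc a).const_mul N) hpointwise
  simp only [hlin, ← mul_sum]
  rw [← integral_finsetSum _ fun j _ => integrable_exp_neg_mul_sq_add_mul hb (S j)]
  refine (mul_le_mul_of_nonneg_left hint (by positivity)).trans_eq ?_
  have hsqrt : (√(π / b))⁻¹ * √(π / (b - c)) = (√(1 - 4 * β * c))⁻¹ := by
    rw [← sqrt_inv, ← sqrt_inv, ← sqrt_mul (by positivity), hbc_eq]
    congr 1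
    field_simp
  have hexp : a ^ 2 / (4 * (b - c)) = β * a ^ 2 / (1 - 4 * β * c) := by
    rw [hbc_eq]
    field_simp
    linear_combination -a ^ 2 * hb4
  rw [integral_const_mul, integral_exp_neg_mul_sq_add_mul hbc, hexp, ← hsqrt]
  ring

end

theorem Sk_square_mgf_bound_general (n : ℕ) (𝒜 : Finset ℝ) (h𝒜 : 𝒜.Nonempty)
    (ε : Fin n → ℝ) (hε : ∀ i, ε i ∈ 𝒜) (B : ℝ) (hB : B = 𝒜.sup' h𝒜 fun a => |a|)
    (k : ℕ) (hk1 : 1 ≤ k) (hk : 3 * k ≤ 2 * n)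
    (α : ℝ) (hα0 : 0 < α) (hα : α < 1 / (4 * B ^ 2)) :
    (∑ π : Equiv.Perm (Fin n), Real.exp (α *
        (∑ i ∈ Finset.univ.filter (fun i : Fin n => (i : ℕ) < k), ε (π i)) ^ 2 / k))
        / (Nat.factorial n : ℝ)
      ≤ (Real.sqrt (1 - 4 * α * B ^ 2))⁻¹
          * Real.exp (α * k * (∑ i, ε i) ^ 2 / ((1 - 4 * α * B ^ 2) * n ^ 2)) := by
  set P := univ.filter fun i : Fin n => (i : ℕ) < k
  have hP : #P = k := by rw [Fin.card_filter_val_lt]; omega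
  have hle : ∀ i, |ε i| ≤ B := fun i => hB ▸ le_sup' (fun a => |a|) (hε i)
  have : Nonempty (Fin n) := ⟨⟨0, by omega⟩⟩
  have hk0 : (0 : ℝ) < k := by exact_mod_cast hk1
  have hd : 4 * α * B ^ 2 < 1 := by
    rcases (sq_nonneg B).eq_or_lt with hB0 | hB0
    · simp [← hB0]
    · rw [lt_div_iff₀ (by positivity)] at hα
      linarith
  have hmgf : ∀ u, ∑ σ : Perm (Fin n), Real.exp (u * ∑ i ∈ P, ε (σ i))
      ≤ n.factorial * Real.exp (k * ((∑ i, ε i) / n) * u + k * B ^ 2 * u ^ 2) := fun u => by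
    refine (sum_perm_exp_mul_sum_le hle P u).trans ?_
    rw [hP, Fintype.card_fin]
    gcongr
    linarith [mul_nonneg hk0.le (mul_nonneg (sq_nonneg B) (sq_nonneg u))]
  have hvar : 4 * (α / k) * (k * B ^ 2) = 4 * α * B ^ 2 := by field_simp
  have hmain := sum_exp_mul_sq_le _ (div_pos hα0 hk0) (hvar ▸ hd) hmgf
  have hexp : α / k * (k * ((∑ i, ε i) / n)) ^ 2 / (1 - 4 * α * B ^ 2)
      = α * k * (∑ i, ε i) ^ 2 / ((1 - 4 * α * B ^ 2) * n ^ 2) := by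
    field_simp
  rw [hvar, hexp] at hmain
  simp only [div_mul_eq_mul_div] at hmain
  rw [div_le_iff₀ (by positivity)]
  exact hmain.trans_eq (by ring)

/-- For `ε₁,...,εₙ` in a finite set `𝒜` with `B = max_{a ∈ 𝒜}|a|`, a uniform random
permutation `π`, `Sₙ = Σᵢ εᵢ` and `S_k = Σ_{i ≤ k} ε_{π(i)}`: for `1 ≤ k ≤ 2n/3` and
`0 < α < 1/(4B²)`,
`E[exp(α S_k²/k)] ≤ (1 − 4αB²)^{-1/2} exp(α k Sₙ²/((1 − 4αB²) n²))`. -/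
theorem Sk_square_mgf_bound (n : ℕ) (hn : 0 < n) (𝒜 : Finset ℝ) (h𝒜 : 𝒜.Nonempty)
    (ε : Fin n → ℝ) (hε : ∀ i, ε i ∈ 𝒜) (B : ℝ) (hB : B = 𝒜.sup' h𝒜 fun a => |a|)
    (k : ℕ) (hk1 : 1 ≤ k) (hk : 3 * k ≤ 2 * n)
    (α : ℝ) (hα0 : 0 < α) (hα : α < 1 / (4 * B ^ 2)) :
    (∑ π : Equiv.Perm (Fin n), Real.exp (α *
        (∑ i ∈ Finset.univ.filter (fun i : Fin n => (i : ℕ) < k), ε (π i)) ^ 2 / k))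
        / (Nat.factorial n : ℝ)
      ≤ (Real.sqrt (1 - 4 * α * B ^ 2))⁻¹
          * Real.exp (α * k * (∑ i, ε i) ^ 2 / ((1 - 4 * α * B ^ 2) * n ^ 2)) :=
  Sk_square_mgf_bound_general n 𝒜 h𝒜 ε hε B hB k hk1 hk α hα0 hα
end

section
/- If U is uniformly distributed on [−a,a] for some a > 0, then E[U f(U)] = (1/2) E[(a² − U²) f'(U)] for all Lipschitz f and a.e. derivative f'. -/
/-!
A Lipschitz `f` is absolutely continuous, so integration by parts against the kernel
`a² - x²`, which vanishes at `±a` and has derivative `-2x`, gives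
`∫_{-a}^{a} x f(x) dx = ½ ∫_{-a}^{a} (a² - x²) f'(x) dx`. Since the law of `U` is
`(2a)⁻¹` times Lebesgue measure on `[-a, a]`, both expectations are `(2a)⁻¹` times these integrals.
-/

open MeasureTheory ProbabilityTheory Real Set

theorem AbsolutelyContinuousOnInterval.integral_mul_eq_half_integral_sq_sub_mul_deriv
    {f : ℝ → ℝ} {a : ℝ} (hf : AbsolutelyContinuousOnInterval f (-a) a) :
    ∫ x in (-a)..a, x * f x = (1 / 2) * ∫ x in (-a)..a, (a ^ 2 - x ^ 2) * deriv f x := by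
  have hk : AbsolutelyContinuousOnInterval (fun x : ℝ => a ^ 2 - x ^ 2) (-a) a :=
    (contDiff_const.sub (contDiff_id.pow 2)).contDiffOn.absolutelyContinuousOnInterval
  have hdk : ∀ x : ℝ, deriv (fun x : ℝ => a ^ 2 - x ^ 2) x * f x = -2 * (x * f x) := by
    intro x
    simp [mul_assoc]
  rw [hk.integral_mul_deriv_eq_deriv_mul hf]
  simp only [hdk, intervalIntegral.integral_const_mul]
  ring

theorem integral_mul_eq_half_integral_sq_sub_mul_of_ae_hasDerivAt
    {f f' : ℝ → ℝ} {a : ℝ} (hf : AbsolutelyContinuousOnInterval f (-a) a)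
    (hf' : ∀ᵐ x, HasDerivAt f (f' x) x) :
    ∫ x in (-a)..a, x * f x = (1 / 2) * ∫ x in (-a)..a, (a ^ 2 - x ^ 2) * f' x := by
  rw [hf.integral_mul_eq_half_integral_sq_sub_mul_deriv]
  congr 1
  refine intervalIntegral.integral_congr_ae ?_
  filter_upwards [hf'] with x hx _
  rw [hx.deriv]

theorem integral_comp_eq_of_map_eq_uniform {Ω : Type*} [MeasurableSpace Ω] {μ : Measure Ω}
    {U : Ω → ℝ} {a b : ℝ} (hab : a ≤ b) (hUm : AEMeasurable U μ)
    (hU : μ.map U = (ENNReal.ofReal (b - a))⁻¹ • volume.restrict (Icc a b))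
    {φ : ℝ → ℝ} (hφ : AEStronglyMeasurable φ volume) :
    ∫ ω, φ (U ω) ∂μ = (b - a)⁻¹ * ∫ x in a..b, φ x := by
  have hφU : AEStronglyMeasurable φ (μ.map U) := by
    rw [hU]
    exact hφ.mono_ac (Measure.smul_absolutelyContinuous.trans
      Measure.restrict_le_self.absolutelyContinuous)
  rw [← integral_map hUm hφU, hU, MeasureTheory.integral_smul_measure,
    integral_Icc_eq_integral_Ioc, ← intervalIntegral.integral_of_le hab, ENNReal.toReal_inv,
    ENNReal.toReal_ofReal (sub_nonneg.mpr hab), smul_eq_mul]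

theorem uniform_stein_coefficient_general
    {Ω : Type*} [MeasurableSpace Ω] (μ : Measure Ω)
    (U : Ω → ℝ) (a : ℝ) (ha : 0 < a) (hUm : Measurable U)
    (hU : μ.map U = (ENNReal.ofReal (2 * a))⁻¹ • volume.restrict (Set.Icc (-a) a)) :
    ∀ (f f' : ℝ → ℝ), (∃ K, LipschitzWith K f) →
      (∀ᵐ x ∂(volume : Measure ℝ), HasDerivAt f (f' x) x) →
      Integrable (fun ω => U ω * f (U ω)) μ →
      Integrable (fun ω => (a ^ 2 - U ω ^ 2) * f' (U ω)) μ →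
      ∫ ω, U ω * f (U ω) ∂μ = (1 / 2) * ∫ ω, (a ^ 2 - U ω ^ 2) * f' (U ω) ∂μ := by
  rintro f f' ⟨K, hK⟩ hf' - -
  have hU' : μ.map U = (ENNReal.ofReal (a - -a))⁻¹ • volume.restrict (Icc (-a) a) := by
    rwa [sub_neg_eq_add, ← two_mul]
  have hf'm : AEStronglyMeasurable f' volume :=
    (stronglyMeasurable_deriv f).aestronglyMeasurable.congr (hf'.mono fun x hx => hx.deriv)
  have hka : Continuous fun x : ℝ => a ^ 2 - x ^ 2 := by fun_prop
  have haa : -a ≤ a := by linarith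
  rw [integral_comp_eq_of_map_eq_uniform (φ := fun x => x * f x) haa hUm.aemeasurable hU'
      (continuous_id.mul hK.continuous).aestronglyMeasurable,
    integral_comp_eq_of_map_eq_uniform (φ := fun x => (a ^ 2 - x ^ 2) * f' x) haa
      hUm.aemeasurable hU' (hka.aestronglyMeasurable.mul hf'm),
    integral_mul_eq_half_integral_sq_sub_mul_of_ae_hasDerivAt
      hK.lipschitzOnWith.absolutelyContinuousOnInterval hf']
  ring

/-- If `U` is uniform on `[−a,a]` with `a > 0`, then
`E[U f(U)] = (1/2) E[(a² − U²) f'(U)]` for all Lipschitz `f` and a.e. derivative `f'`. -/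
theorem uniform_stein_coefficient
    {Ω : Type*} [MeasurableSpace Ω] (μ : Measure Ω) [IsProbabilityMeasure μ]
    (U : Ω → ℝ) (a : ℝ) (ha : 0 < a) (hUm : Measurable U)
    (hU : μ.map U = (ENNReal.ofReal (2 * a))⁻¹ • volume.restrict (Set.Icc (-a) a)) :
    ∀ (f f' : ℝ → ℝ), (∃ K, LipschitzWith K f) →
      (∀ᵐ x ∂(volume : Measure ℝ), HasDerivAt f (f' x) x) →
      Integrable (fun ω => U ω * f (U ω)) μ →
      Integrable (fun ω => (a ^ 2 - U ω ^ 2) * f' (U ω)) μ →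
      ∫ ω, U ω * f (U ω) ∂μ = (1 / 2) * ∫ ω, (a ^ 2 - U ω ^ 2) * f' (U ω) ∂μ :=
  uniform_stein_coefficient_general μ U a ha hUm hU
end
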